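/- arXiv:solv-int/9509001 — 6 statements merged into one kernel-verified Lean document; each statement's English description precedes it below -/
import Mathlib

section
/- The operators Δ_i = Σ_{j≠i} (x_i - x_j)^{-1}(1 - P_ij) pairwise commute: [Δ_i, Δ_k] = 0 for all i, k. -/
/-!
Each `Δ_i` is the sum over `j ≠ i` of the divided differences `∂_{ij} = (x_i - x_j)⁻¹ (1 - P_{ij})`,
so `[Δ_i, Δ_k]` is the sum of the commutators `[∂_{ij}, ∂_{kl}]` over `j ≠ i`, `l ≠ k`. Divided
differences along disjoint transpositions commute, and `∂_{ki} = -∂_{ik}`. The remaining terms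
group, for each `m ∉ {i, k}`, into `[∂_{ik}, ∂_{km}] + [∂_{im}, ∂_{ki}] + [∂_{im}, ∂_{km}]`, which
vanishes by a direct computation with the values of `f` at the points obtained from `x` by
permuting `x_i, x_k, x_m`; only here are distinct coordinates needed.
-/

open Finset

noncomputable section

/-- The open set of points with pairwise distinct coordinates. -/
def Omega (N : ℕ) : Set (Fin N → ℝ) := {x | Function.Injective x}

/-- The coordinate-swap (transposition) operator `P_{ij}`. -/
def Pswap {N : ℕ} (i j : Fin N) (f : (Fin N → ℝ) → ℝ) : (Fin N → ℝ) → ℝ :=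
  fun x => f (x ∘ Equiv.swap i j)

/-- The difference operator `Δ_i = ∑_{j ≠ i} (x_i - x_j)⁻¹ (1 - P_{ij})`. -/
def Delta {N : ℕ} (i : Fin N) (f : (Fin N → ℝ) → ℝ) : (Fin N → ℝ) → ℝ :=
  fun x => ∑ j ∈ Finset.univ.erase i, (f x - f (x ∘ Equiv.swap i j)) / (x i - x j)

/-- The partial derivative operator `∂_i`. -/
def pd {N : ℕ} (i : Fin N) (f : (Fin N → ℝ) → ℝ) : (Fin N → ℝ) → ℝ :=
  fun x => fderiv ℝ f x (Pi.single i 1)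

/-- Multiplication by the `i`-th coordinate. -/
def xmul {N : ℕ} (i : Fin N) (f : (Fin N → ℝ) → ℝ) : (Fin N → ℝ) → ℝ :=
  fun x => x i * f x

/-- The Dunkl operator `D_i = ∂_i + g Δ_i`. -/
def Dunkl {N : ℕ} (g : ℝ) (i : Fin N) (f : (Fin N → ℝ) → ℝ) : (Fin N → ℝ) → ℝ :=
  fun x => pd i f x + g * Delta i f x

section DivDiff

variable {ι K : Type*} [DecidableEq ι] [Field K]

def divDiff (i j : ι) (f : (ι → K) → K) (x : ι → K) : K :=
  (f x - f (x ∘ Equiv.swap i j)) / (x i - x j)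

theorem divDiff_sum {α : Type*} (i j : ι) (s : Finset α) (g : α → (ι → K) → K) (x : ι → K) :
    divDiff i j (fun y => ∑ l ∈ s, g l y) x = ∑ l ∈ s, divDiff i j (g l) x := by
  simp only [divDiff, ← sum_sub_distrib, sum_div]

theorem divDiff_antisymm (i j : ι) (f : (ι → K) → K) : divDiff j i f = -divDiff i j f := by
  ext x
  simp only [divDiff, Equiv.swap_comm j i, ← neg_sub (x i), div_neg, Pi.neg_apply]

theorem comp_swap_comp_swap {α : Type*} (x : ι → α) (a b c d : ι) :
    (x ∘ Equiv.swap a b) ∘ Equiv.swap c d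
      = (x ∘ Equiv.swap (Equiv.swap a b c) (Equiv.swap a b d)) ∘ Equiv.swap a b :=
  congrArg (fun σ : Equiv.Perm ι => x ∘ σ) (Equiv.mul_swap_eq_swap_mul (Equiv.swap a b) c d)

theorem divDiff_commute_reverse (f : (ι → K) → K) (x : ι → K) (i k : ι) :
    divDiff i k (divDiff k i f) x = divDiff k i (divDiff i k f) x := by
  simp only [divDiff_antisymm i k]
  simp only [divDiff, Pi.neg_apply]
  ring

theorem divDiff_commute_of_disjoint (f : (ι → K) → K) (x : ι → K) {i j k l : ι}
    (hik : i ≠ k) (hil : i ≠ l) (hjk : j ≠ k) (hjl : j ≠ l) :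
    divDiff i j (divDiff k l f) x = divDiff k l (divDiff i j f) x := by
  simp only [divDiff, Function.comp_apply, Equiv.swap_apply_of_ne_of_ne hik.symm hjk.symm,
    Equiv.swap_apply_of_ne_of_ne hil.symm hjl.symm, Equiv.swap_apply_of_ne_of_ne hik hil,
    Equiv.swap_apply_of_ne_of_ne hjk hjl, comp_swap_comp_swap x i j k l]
  ring

theorem divDiff_commutator_triple (f : (ι → K) → K) (x : ι → K) {i k m : ι}
    (hik : x i ≠ x k) (him : x i ≠ x m) (hkm : x k ≠ x m) :
    (divDiff i k (divDiff k m f) x - divDiff k m (divDiff i k f) x)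
      + (divDiff i m (divDiff k i f) x - divDiff k i (divDiff i m f) x)
      + (divDiff i m (divDiff k m f) x - divDiff k m (divDiff i m f) x) = 0 := by
  have hik' := ne_of_apply_ne x hik
  have him' := ne_of_apply_ne x him
  have hkm' := ne_of_apply_ne x hkm
  -- Six composite points occur; they are the two 3-cycles of `x_i, x_k, x_m`, `A` and `B`.
  have hA₁ : (x ∘ Equiv.swap i k) ∘ Equiv.swap k m = (x ∘ Equiv.swap i m) ∘ Equiv.swap i k := by
    rw [comp_swap_comp_swap, Equiv.swap_apply_right,
      Equiv.swap_apply_of_ne_of_ne him'.symm hkm'.symm]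
  have hA₂ : (x ∘ Equiv.swap k m) ∘ Equiv.swap i m = (x ∘ Equiv.swap i m) ∘ Equiv.swap i k := by
    rw [comp_swap_comp_swap, Equiv.swap_apply_of_ne_of_ne hik' him', Equiv.swap_apply_right, hA₁]
  have hB₂ : (x ∘ Equiv.swap i m) ∘ Equiv.swap k m = (x ∘ Equiv.swap i k) ∘ Equiv.swap i m := by
    rw [comp_swap_comp_swap, Equiv.swap_apply_of_ne_of_ne hik'.symm hkm', Equiv.swap_apply_right,
      Equiv.swap_comm k i]
  have hB₁ : (x ∘ Equiv.swap k m) ∘ Equiv.swap i k = (x ∘ Equiv.swap i k) ∘ Equiv.swap i m := by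
    rw [comp_swap_comp_swap, Equiv.swap_apply_of_ne_of_ne hik' him', Equiv.swap_apply_left, hB₂]
  simp only [divDiff_antisymm i k]
  simp only [divDiff, Pi.neg_apply, hA₁, hA₂, hB₁, hB₂, Function.comp_apply, Equiv.swap_apply_left,
    Equiv.swap_apply_right, Equiv.swap_apply_of_ne_of_ne him'.symm hkm'.symm,
    Equiv.swap_apply_of_ne_of_ne hik'.symm hkm', Equiv.swap_apply_of_ne_of_ne hik' him']
  have := sub_ne_zero.2 hik
  have := sub_ne_zero.2 him
  have := sub_ne_zero.2 hkm
  field_simp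
  ring

end DivDiff

theorem sum_erase_sum_erase_eq_zero {ι M : Type*} [Fintype ι] [DecidableEq ι] [AddCommGroup M]
    {i k : ι} (hik : i ≠ k) (D : ι → ι → M)
    (hdisj : ∀ j l, j ≠ i → j ≠ k → l ≠ i → l ≠ k → j ≠ l → D j l = 0) (hki : D k i = 0)
    (htriple : ∀ m, m ≠ i → m ≠ k → D k m + D m i + D m m = 0) :
    ∑ j ∈ univ.erase i, ∑ l ∈ univ.erase k, D j l = 0 := by
  set T := (univ.erase i).erase k
  have hrow (j : ι) : ∑ l ∈ univ.erase k, D j l = D j i + ∑ l ∈ T, D j l := by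
    rw [← add_sum_erase _ _ (mem_erase.2 ⟨hik, mem_univ i⟩), erase_right_comm]
  have hrowT (j : ι) (hj : j ∈ T) : ∑ l ∈ univ.erase k, D j l = D j i + D j j := by
    rw [hrow, sum_eq_single_of_mem j hj fun l hl hlj => hdisj j l ?_ ?_ ?_ ?_ (Ne.symm hlj)] <;>
      simp_all [T]
  calc ∑ j ∈ univ.erase i, ∑ l ∈ univ.erase k, D j l
      = ∑ l ∈ univ.erase k, D k l + ∑ j ∈ T, ∑ l ∈ univ.erase k, D j l :=
        (add_sum_erase _ _ (mem_erase.2 ⟨hik.symm, mem_univ k⟩)).symm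
    _ = ∑ m ∈ T, (D k m + D m i + D m m) := by
        rw [hrow k, hki, zero_add, sum_congr rfl hrowT, ← sum_add_distrib]
        simp only [add_assoc]
    _ = 0 := sum_eq_zero fun m hm =>
        htriple m (mem_erase.1 (mem_of_mem_erase hm)).1 (ne_of_mem_erase hm)

theorem Delta_eq_sum_divDiff {N : ℕ} (i : Fin N) (f : (Fin N → ℝ) → ℝ) :
    Delta i f = fun x => ∑ j ∈ univ.erase i, divDiff i j f x :=
  rfl

theorem Delta_Delta_eq_sum {N : ℕ} (i k : Fin N) (f : (Fin N → ℝ) → ℝ) (x : Fin N → ℝ) :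
    Delta i (Delta k f) x =
      ∑ j ∈ univ.erase i, ∑ l ∈ univ.erase k, divDiff i j (divDiff k l f) x := by
  simp only [Delta_eq_sum_divDiff, divDiff_sum]

theorem Delta_comm {N : ℕ} (i k : Fin N)
    (f : (Fin N → ℝ) → ℝ) (x : Fin N → ℝ) (hx : x ∈ Omega N) :
    Delta i (Delta k f) x = Delta k (Delta i f) x := by
  rcases eq_or_ne i k with rfl | hik
  · rfl
  have hx_ne {a b : Fin N} (hab : a ≠ b) : x a ≠ x b := hx.ne hab
  rw [← sub_eq_zero, Delta_Delta_eq_sum, Delta_Delta_eq_sum, sum_comm (s := univ.erase k),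
    ← sum_sub_distrib]
  simp_rw [← sum_sub_distrib]
  refine sum_erase_sum_erase_eq_zero hik _ ?_ ?_ ?_
  · intro j l _ hjk hli _ hjl
    exact sub_eq_zero.2 (divDiff_commute_of_disjoint f x hik (Ne.symm hli) hjk hjl)
  · exact sub_eq_zero.2 (divDiff_commute_reverse f x i k)
  · intro m hmi hmk
    exact divDiff_commutator_triple f x (hx_ne hik) (hx_ne (Ne.symm hmi)) (hx_ne (Ne.symm hmk))
end
end

section
/- The commutator of multiplication by x_i with Δ_j is given by [x_i, Δ_j] = (1 - δ_ij) P_ij - δ_ij Σ_{k≠i} P_ik, where x_i denotes the operator of multiplication by the i-th coordinate. -/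
open Finset

noncomputable section

theorem xmul_Delta_sub_Delta_xmul {N : ℕ} (i j : Fin N) (f : (Fin N → ℝ) → ℝ)
    (x : Fin N → ℝ) :
    xmul i (Delta j f) x - Delta j (xmul i f) x =
      ∑ k ∈ univ.erase j, ((x ∘ Equiv.swap j k) i - x i) / (x j - x k) * Pswap j k f x := by
  simp only [xmul, Delta, Pswap, mul_sum, ← sum_sub_distrib]
  refine sum_congr rfl fun k _ => ?_
  ring

theorem comp_swap_apply_sub_div_sub {ι K : Type*} [DecidableEq ι] [Field K] {x : ι → K}
    (hx : Function.Injective x) {j k : ι} (hjk : j ≠ k) (i : ι) :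
    ((x ∘ Equiv.swap j k) i - x i) / (x j - x k) =
      if i = j then -1 else if i = k then 1 else 0 := by
  have hsub : x j - x k ≠ 0 := sub_ne_zero.mpr (hx.ne hjk)
  split_ifs with hij hik
  · subst hij
    rw [Function.comp_apply, Equiv.swap_apply_left, ← neg_sub, neg_div, div_self hsub]
  · subst hik
    rw [Function.comp_apply, Equiv.swap_apply_right, div_self hsub]
  · rw [Function.comp_apply, Equiv.swap_apply_of_ne_of_ne hij hik, sub_self, zero_div]

theorem xmul_Delta_commutator {N : ℕ} (i j : Fin N)
    (f : (Fin N → ℝ) → ℝ) (x : Fin N → ℝ) (hx : x ∈ Omega N) :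
    xmul i (Delta j f) x - Delta j (xmul i f) x =
      if i = j then -∑ k ∈ Finset.univ.erase i, Pswap i k f x
      else Pswap i j f x := by
  have coeff {k} (hk : k ∈ univ.erase j) :=
    comp_swap_apply_sub_div_sub hx (ne_of_mem_erase hk).symm i
  rw [xmul_Delta_sub_Delta_xmul]
  split_ifs with hij
  · subst hij
    rw [← sum_neg_distrib]
    exact sum_congr rfl fun k hk => by rw [coeff hk, if_pos rfl, neg_one_mul]
  · calc ∑ k ∈ univ.erase j, _ = ∑ k ∈ univ.erase j, if i = k then Pswap j k f x else 0 :=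
          sum_congr rfl fun k hk => by rw [coeff hk, if_neg hij, ite_mul, one_mul, zero_mul]
      _ = Pswap i j f x := by
          rw [sum_ite_eq, if_pos (mem_erase.mpr ⟨hij, mem_univ i⟩), Pswap, Pswap,
            Equiv.swap_comm]
end
end

section
/- For i ≠ j, the commutator of the partial derivative ∂_i with Δ_j equals (x_i - x_j)^{-2}(1 - P_ij) + (x_i - x_j)^{-1}(∂_i - ∂_j) ∘ P_ij, acting on smooth functions on Ω. -/
open Finset

noncomputable section

lemma isOpen_Omega (N : ℕ) : IsOpen (Omega N) := by
  have h : Omega N = ⋂ (p : Fin N × Fin N) (_ : p.1 ≠ p.2), {x : Fin N → ℝ | x p.1 ≠ x p.2} := by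
    ext x
    simp only [Omega, Set.mem_setOf_eq, Set.mem_iInter]
    constructor
    · intro h p hp he; exact hp (h he)
    · intro h a b hab
      by_contra hne
      exact h (a, b) hne hab
  rw [h]
  exact isOpen_iInter_of_finite fun p => isOpen_iInter_of_finite fun hp =>
    isOpen_ne_fun (continuous_apply p.1) (continuous_apply p.2)

lemma comp_mem_Omega {N : ℕ} {x : Fin N → ℝ} (hx : x ∈ Omega N) (e : Equiv.Perm (Fin N)) :
    x ∘ ⇑e ∈ Omega N := hx.comp e.injective

/-- composition with a permutation as a continuous linear map -/
def Lc {N : ℕ} (e : Equiv.Perm (Fin N)) : (Fin N → ℝ) →L[ℝ] (Fin N → ℝ) :=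
  (LinearMap.funLeft ℝ ℝ ⇑e).toContinuousLinearMap

lemma Lc_apply {N : ℕ} (e : Equiv.Perm (Fin N)) (y : Fin N → ℝ) : Lc e y = y ∘ ⇑e := rfl

lemma single_comp {N : ℕ} (e : Equiv.Perm (Fin N)) (m : Fin N) :
    (Pi.single m (1:ℝ)) ∘ ⇑e = Pi.single (e.symm m) 1 := by
  funext n
  simp only [Function.comp_apply, Pi.single_apply]
  simp [Equiv.eq_symm_apply]

lemma line_comp {N : ℕ} (e : Equiv.Perm (Fin N)) (y v : Fin N → ℝ) (t : ℝ) :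
    (y + t • v) ∘ ⇑e = y ∘ ⇑e + t • (v ∘ ⇑e) := rfl

lemma hasDerivAt_line {N : ℕ} {f : (Fin N → ℝ) → ℝ} {y : Fin N → ℝ}
    (hfy : DifferentiableAt ℝ f y) (v : Fin N → ℝ) :
    HasDerivAt (fun t : ℝ => f (y + t • v)) (fderiv ℝ f y v) 0 := by
  have hline : HasDerivAt (fun t : ℝ => y + t • v) v 0 := by
    have h1 : HasDerivAt (fun t : ℝ => t • v) ((1:ℝ) • v) 0 := (hasDerivAt_id 0).smul_const v
    simpa using h1.const_add y
  have h0 : y + (0:ℝ) • v = y := by simp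
  have hfd : HasFDerivAt f (fderiv ℝ f y) (y + (0:ℝ) • v) := by
    rw [h0]; exact hfy.hasFDerivAt
  have := hfd.comp_hasDerivAt (0:ℝ) hline
  simpa [Function.comp_def] using this

theorem pd_Delta_commutator {N : ℕ} (i j : Fin N) (hij : i ≠ j)
    (f : (Fin N → ℝ) → ℝ) (hf : ContDiffOn ℝ (⊤ : ℕ∞) f (Omega N))
    (x : Fin N → ℝ) (hx : x ∈ Omega N) :
    pd i (Delta j f) x - Delta j (pd i f) x =
      (f x - Pswap i j f x) / (x i - x j) ^ 2 +
        (pd i (Pswap i j f) x - pd j (Pswap i j f) x) / (x i - x j) := by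
  classical
  have hOmega := isOpen_Omega N
  have hdiff : ∀ y ∈ Omega N, DifferentiableAt ℝ f y := fun y hy =>
    (hf.contDiffAt (hOmega.mem_nhds hy)).differentiableAt (by simp)
  have hxmem : ∀ e : Equiv.Perm (Fin N), x ∘ ⇑e ∈ Omega N := comp_mem_Omega hx
  have hne : ∀ a b : Fin N, a ≠ b → x a - x b ≠ 0 := fun a b hab =>
    sub_ne_zero_of_ne (fun h => hab (hx h))
  have hdc : ∀ e : Equiv.Perm (Fin N), DifferentiableAt ℝ (fun y => f (y ∘ ⇑e)) x := by
    intro e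
    have := (hdiff _ (hxmem e)).comp x (Lc e).differentiableAt
    simpa [Function.comp_def, Lc_apply] using this
  have hproj : ∀ (m : Fin N) (y : Fin N → ℝ), DifferentiableAt ℝ (fun y : Fin N → ℝ => y m) y :=
    fun m y => (ContinuousLinearMap.proj m : (Fin N → ℝ) →L[ℝ] ℝ).differentiableAt
  have key : ∀ (F : (Fin N → ℝ) → ℝ) (m : Fin N) (c : ℝ), DifferentiableAt ℝ F x →
      HasDerivAt (fun t : ℝ => F (x + t • (Pi.single m 1 : Fin N → ℝ))) c 0 → pd m F x = c := by
    intro F m c hF h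
    exact (hasDerivAt_line hF _).unique h
  have hlf : ∀ y ∈ Omega N, ∀ m : Fin N,
      HasDerivAt (fun t : ℝ => f (y + t • (Pi.single m 1 : Fin N → ℝ))) (pd m f y) 0 :=
    fun y hy m => hasDerivAt_line (hdiff y hy) _
  -- the two Pswap derivatives
  have hPi : pd i (Pswap i j f) x = pd j f (x ∘ ⇑(Equiv.swap i j)) := by
    apply key _ _ _ (hdc _)
    have h := hlf (x ∘ ⇑(Equiv.swap i j)) (hxmem _) j
    have funeq : (fun t : ℝ => f ((x + t • (Pi.single i 1 : Fin N → ℝ)) ∘ ⇑(Equiv.swap i j))) =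
        (fun t : ℝ => f (x ∘ ⇑(Equiv.swap i j) + t • (Pi.single j 1 : Fin N → ℝ))) := by
      funext t
      rw [line_comp, single_comp, Equiv.symm_swap]
      simp
    rw [funeq]; exact h
  have hPj : pd j (Pswap i j f) x = pd i f (x ∘ ⇑(Equiv.swap i j)) := by
    apply key _ _ _ (hdc _)
    have h := hlf (x ∘ ⇑(Equiv.swap i j)) (hxmem _) i
    have funeq : (fun t : ℝ => f ((x + t • (Pi.single j 1 : Fin N → ℝ)) ∘ ⇑(Equiv.swap i j))) =
        (fun t : ℝ => f (x ∘ ⇑(Equiv.swap i j) + t • (Pi.single i 1 : Fin N → ℝ))) := by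
      funext t
      rw [line_comp, single_comp, Equiv.symm_swap]
      simp
    rw [funeq]; exact h
  -- derivative of Delta j f in direction i
  set d : Fin N → ℝ := fun k =>
    ((pd i f x - pd ((Equiv.swap j k) i) f (x ∘ ⇑(Equiv.swap j k))) * (x j - x k) -
      (f x - f (x ∘ ⇑(Equiv.swap j k))) * ((Pi.single i 1 : Fin N → ℝ) j - (Pi.single i 1 : Fin N → ℝ) k)) /
      (x j - x k) ^ 2 with hd
  have hmain : pd i (Delta j f) x = ∑ k ∈ Finset.univ.erase j, d k := by
    apply key
    · -- differentiability of Delta j f at x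
      have hall : ∀ k ∈ Finset.univ.erase j, DifferentiableAt ℝ
          (fun y : Fin N → ℝ => (f y - f (y ∘ ⇑(Equiv.swap j k))) / (y j - y k)) x := by
        intro k hk
        have hkj : k ≠ j := Finset.ne_of_mem_erase hk
        have h1 : DifferentiableAt ℝ (fun y : Fin N → ℝ => f y - f (y ∘ ⇑(Equiv.swap j k))) x :=
        (hdiff x hx).sub (hdc _)
        have h2 : DifferentiableAt ℝ (fun y : Fin N → ℝ => y j - y k) x :=
          (hproj j x).sub (hproj k x)
        have h2' : DifferentiableAt ℝ (fun y : Fin N → ℝ => (y j - y k)⁻¹) x :=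
          h2.inv (hne j k (Ne.symm hkj))
        have h3 := h1.fun_mul h2'
        simpa [div_eq_mul_inv] using h3
      exact DifferentiableAt.fun_sum hall
    · have funeq : (fun t : ℝ => Delta j f (x + t • (Pi.single i 1 : Fin N → ℝ))) =
          (fun t : ℝ => ∑ k ∈ Finset.univ.erase j,
            (f (x + t • (Pi.single i 1 : Fin N → ℝ)) -
              f (x ∘ ⇑(Equiv.swap j k) + t • (Pi.single ((Equiv.swap j k) i) 1 : Fin N → ℝ))) /
            ((x j + t * (Pi.single i 1 : Fin N → ℝ) j) - (x k + t * (Pi.single i 1 : Fin N → ℝ) k))) := by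
        funext t
        unfold Delta
        refine Finset.sum_congr rfl fun k hk => ?_
        rw [line_comp, single_comp, Equiv.symm_swap]
        simp
      rw [funeq]
      apply HasDerivAt.fun_sum
      intro k hk
      have hkj : k ≠ j := Finset.ne_of_mem_erase hk
      have hnum : HasDerivAt (fun t : ℝ => f (x + t • (Pi.single i 1 : Fin N → ℝ)) -
          f (x ∘ ⇑(Equiv.swap j k) + t • (Pi.single ((Equiv.swap j k) i) 1 : Fin N → ℝ)))
          (pd i f x - pd ((Equiv.swap j k) i) f (x ∘ ⇑(Equiv.swap j k))) 0 :=
        (hlf x hx i).sub (hlf _ (hxmem _) _)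
      have hden : HasDerivAt (fun t : ℝ =>
          (x j + t * (Pi.single i 1 : Fin N → ℝ) j) - (x k + t * (Pi.single i 1 : Fin N → ℝ) k))
          ((Pi.single i 1 : Fin N → ℝ) j - (Pi.single i 1 : Fin N → ℝ) k) 0 :=
        ((hasDerivAt_mul_const _).const_add (x j)).sub
          ((hasDerivAt_mul_const _).const_add (x k))
      have hne0 : (x j + (0:ℝ) * (Pi.single i 1 : Fin N → ℝ) j) - (x k + (0:ℝ) * (Pi.single i 1 : Fin N → ℝ) k) ≠ 0 := by
        simpa using hne j k (Ne.symm hkj)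
      have := hnum.div hden hne0
      simp only [zero_smul, add_zero, zero_mul] at this
      exact this
  -- now compute
  rw [hmain]
  show _ - ∑ k ∈ Finset.univ.erase j, (pd i f x - pd i f (x ∘ ⇑(Equiv.swap j k))) / (x j - x k) = _
  rw [← Finset.sum_sub_distrib]
  have hi : i ∈ Finset.univ.erase j := Finset.mem_erase.2 ⟨hij, Finset.mem_univ i⟩
  rw [Finset.sum_eq_single_of_mem i hi]
  · -- the i-term equals the RHS
    have hsw : Equiv.swap j i = Equiv.swap i j := Equiv.swap_comm j i
    rw [hd]
    simp only [hsw, Equiv.swap_apply_right, Equiv.swap_apply_left, Pi.single_eq_of_ne hij.symm, Pi.single_eq_same]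
    rw [hPi, hPj]
    show _ = (f x - f (x ∘ ⇑(Equiv.swap i j))) / _ + _
    have h1 := hne j i (Ne.symm hij)
    have h2 := hne i j hij
    field_simp
    ring
  · intro k hk hki
    have hkj : k ≠ j := Finset.ne_of_mem_erase hk
    rw [hd]
    have hswi : (Equiv.swap j k) i = i :=
      Equiv.swap_apply_of_ne_of_ne hij (Ne.symm hki)
    simp only [hswi, Pi.single_eq_of_ne hij.symm, Pi.single_eq_of_ne hki]
    have h1 := hne j k (Ne.symm hkj)
    field_simp
    ring
end
end

section
/- In any associative algebra with pairwise commuting H_l and elements S_l satisfying [S_l,H_n] = −n H_{l+n−1} and [S_l,S_n] = (l−n) S_{l+n−1}, the elements A^{(k)}_{ij} = S_i H_{j+k−1} − S_j H_{i+k−1} satisfy [A^{(k)}_{ij}, S_n] = i A^{(k)}_{i+n−1,j} + j A^{(k)}_{i,j+n−1} + (k−1) A^{(k+n−1)}_{ij} − n A^{(k+1−n)}_{i+n−1,j+n−1}, whenever all indices involved are nonnegative. -/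
/-!
The commutator of `S_i H_m` with `S_n` is `S_i [H_m, S_n] + [S_i, S_n] H_m`, so the identity
reduces to `[H_m, S_n] = m H_{m+n-1}` for `n ≥ 1`. For `m ≥ 1` this is the given relation; for
`m = 0` write `H_0 = [H_1, S_0]` and expand `[[H_1, S_0], S_n]` by the Jacobi identity, which
gives `-n H_{n-1} + n H_{n-1} = 0`. The rest is collecting terms, with `n ≤ k` ensuring that the
index `k + 1 - n` of the last term is not truncated.
-/

/-- The hidden-symmetry generators `A^{(k)}_{ij} = S_i H_{j+k-1} - S_j H_{i+k-1}`. -/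
def Aop {A : Type*} [Ring A] (H S : ℕ → A) (k i j : ℕ) : A :=
  S i * H (j + k - 1) - S j * H (i + k - 1)

section

variable {A : Type*} [Ring A] {H S : ℕ → A}

theorem Aop_succ (k i j : ℕ) : Aop H S (k + 1) i j = S i * H (j + k) - S j * H (i + k) := rfl

theorem commute_H_zero_S
    (hSH : ∀ l n, 1 ≤ n → S l * H n - H n * S l = -(n : A) * H (l + n - 1))
    (hSS : ∀ l n, 1 ≤ l + n →
      S l * S n - S n * S l = ((l : A) - (n : A)) * S (l + n - 1))
    (n : ℕ) : Commute (H 0) (S (n + 1)) := by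
  have h₁₀ := hSH 0 1 le_rfl
  have h₀ₙ := hSS 0 (n + 1) (by omega)
  have hₙ₁ := hSH (n + 1) 1 le_rfl
  have hₙ₁' := hSH n 1 le_rfl
  have h₀ₙ' := hSH 0 (n + 1) (by omega)
  simp only [Nat.add_sub_cancel, zero_add] at h₁₀ h₀ₙ hₙ₁ hₙ₁' h₀ₙ'
  push_cast at h₁₀ h₀ₙ hₙ₁ hₙ₁' h₀ₙ'
  rw [commute_iff_eq]
  linear_combination (norm := noncomm_ring)
    h₁₀ * S (n + 1) - S (n + 1) * h₁₀ + H 1 * h₀ₙ - h₀ₙ * H 1 + ((n : A) + 1) * hₙ₁'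
      - hₙ₁ * S 0 + S 0 * hₙ₁ - h₀ₙ' + (Nat.cast_commute n (H 1)).eq * S n

theorem H_S_commutator
    (hSH : ∀ l n, 1 ≤ n → S l * H n - H n * S l = -(n : A) * H (l + n - 1))
    (hSS : ∀ l n, 1 ≤ l + n →
      S l * S n - S n * S l = ((l : A) - (n : A)) * S (l + n - 1))
    (m p : ℕ) : H m * S (p + 1) - S (p + 1) * H m = (m : A) * H (m + p) := by
  cases m with
  | zero => simpa [sub_eq_zero] using (commute_H_zero_S hSH hSS p).eq
  | succ m =>
    have h := hSH (p + 1) (m + 1) (by omega)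
    rw [show p + 1 + (m + 1) - 1 = m + 1 + p by omega] at h
    push_cast at h ⊢
    linear_combination (norm := noncomm_ring) -h

theorem S_mul_H_S_commutator
    (hSH : ∀ l n, 1 ≤ n → S l * H n - H n * S l = -(n : A) * H (l + n - 1))
    (hSS : ∀ l n, 1 ≤ l + n →
      S l * S n - S n * S l = ((l : A) - (n : A)) * S (l + n - 1))
    (l m p : ℕ) :
    S l * H m * S (p + 1) - S (p + 1) * (S l * H m) =
      (m : A) * (S l * H (m + p)) + ((l : A) - (p + 1)) * (S (l + p) * H m) := by
  have hHS := H_S_commutator hSH hSS m p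
  have hSS' := hSS l (p + 1) (by omega)
  rw [show l + (p + 1) - 1 = l + p by omega] at hSS'
  push_cast at hSS'
  linear_combination (norm := noncomm_ring)
    S l * hHS + hSS' * H m - (Nat.cast_commute m (S l)).eq * H (m + p)

end

theorem A_S_commutator_general {A : Type*} [Ring A] (H S : ℕ → A)
    (hSH : ∀ l n, 1 ≤ n → S l * H n - H n * S l = -(n : A) * H (l + n - 1))
    (hSS : ∀ l n, 1 ≤ l + n →
      S l * S n - S n * S l = ((l : A) - (n : A)) * S (l + n - 1)) :
    ∀ k n i j, 1 ≤ k → 1 ≤ n → n ≤ k →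
      Aop H S k i j * S n - S n * Aop H S k i j =
        (i : A) * Aop H S k (i + n - 1) j + (j : A) * Aop H S k i (j + n - 1) +
          ((k : A) - 1) * Aop H S (k + n - 1) i j -
          (n : A) * Aop H S (k + 1 - n) (i + n - 1) (j + n - 1) := by
  intro k n i j _ hn hnk
  obtain ⟨p, rfl⟩ : ∃ p, n = p + 1 := ⟨n - 1, by omega⟩
  obtain ⟨q, rfl⟩ : ∃ q, k = q + p + 1 := ⟨k - (p + 1), by omega⟩
  rw [show q + p + 1 + (p + 1) - 1 = q + p + p + 1 by omega,
    show q + p + 1 + 1 - (p + 1) = q + 1 by omega]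
  simp only [← Nat.add_assoc, Nat.add_sub_cancel, Aop_succ]
  rw [show i + p + q = i + q + p by omega, show j + p + q = j + q + p by omega]
  have hi := S_mul_H_S_commutator hSH hSS i (j + q + p) p
  have hj := S_mul_H_S_commutator hSH hSS j (i + q + p) p
  push_cast at hi hj ⊢
  linear_combination (norm := noncomm_ring) hi - hj

theorem A_S_commutator {A : Type*} [Ring A] (H S : ℕ → A)
    (hHH : ∀ l n, H l * H n = H n * H l)
    (hSH : ∀ l n, 1 ≤ n → S l * H n - H n * S l = -(n : A) * H (l + n - 1))
    (hSS : ∀ l n, 1 ≤ l + n →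
      S l * S n - S n * S l = ((l : A) - (n : A)) * S (l + n - 1)) :
    ∀ k n i j, 1 ≤ k → 1 ≤ n → n ≤ k →
      Aop H S k i j * S n - S n * Aop H S k i j =
        (i : A) * Aop H S k (i + n - 1) j + (j : A) * Aop H S k i (j + n - 1) +
          ((k : A) - 1) * Aop H S (k + n - 1) i j -
          (n : A) * Aop H S (k + 1 - n) (i + n - 1) (j + n - 1) :=
  A_S_commutator_general H S hSH hSS
end

section
/- For the symmetrized exponential F(x, m) = Σ_{σ ∈ S_N} exp(Σ_i m_{σ(i)} x_i), one has for every l ≥ 0 the identity Σ_{i=1}^N x_i ∂^l F/∂x_i^l = Σ_{i=1}^N m_i^l ∂F/∂m_i. -/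
open Finset

noncomputable section

lemma iter_deriv_exp_sum {α : Type*} (s : Finset α) (c d : α → ℝ) (l : ℕ) :
    deriv^[l] (fun t => ∑ σ ∈ s, Real.exp (c σ * t + d σ)) =
      fun t => ∑ σ ∈ s, (c σ) ^ l * Real.exp (c σ * t + d σ) := by
  induction l with
  | zero => simp
  | succ l ih =>
    rw [Function.iterate_succ_apply', ih]
    funext t
    have h : ∀ σ ∈ s, HasDerivAt (fun t => (c σ) ^ l * Real.exp (c σ * t + d σ))
        ((c σ) ^ (l + 1) * Real.exp (c σ * t + d σ)) t := by
      intro σ _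
      have h1 : HasDerivAt (fun t => c σ * t + d σ) (c σ) t := by
        simpa using ((hasDerivAt_id t).const_mul (c σ)).add_const (d σ)
      have h2 := h1.exp
      have h3 := h2.const_mul ((c σ) ^ l)
      exact h3.congr_deriv (by ring)
    exact (HasDerivAt.fun_sum h).deriv

/-- The symmetrised exponential `F(x,m) = ∑_{σ ∈ S_N} exp(∑_i m_{σ(i)} x_i)`. -/
def symExp {N : ℕ} (x m : Fin N → ℝ) : ℝ :=
  ∑ σ : Equiv.Perm (Fin N), Real.exp (∑ i, m (σ i) * x i)

theorem symExp_identity {N : ℕ} (l : ℕ) (x m : Fin N → ℝ) :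
    ∑ i, x i * deriv^[l] (fun t => symExp (Function.update x i t) m) (x i) =
      ∑ i, m i ^ l * deriv (fun t => symExp x (Function.update m i t)) (m i) := by
  have keyL : ∀ i : Fin N, (fun t => symExp (Function.update x i t) m) =
      (fun t => ∑ σ : Equiv.Perm (Fin N),
        Real.exp (m (σ i) * t + ∑ j ∈ univ.erase i, m (σ j) * x j)) := by
    intro i
    funext t
    unfold symExp
    refine Finset.sum_congr rfl fun σ _ => ?_
    congr 1
    rw [← Finset.add_sum_erase _ _ (mem_univ i)]
    congr 1
    · simp
    · exact Finset.sum_congr rfl fun j hj => by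
        rw [Function.update_of_ne (Finset.ne_of_mem_erase hj)]
  have keyR : ∀ i : Fin N, (fun t => symExp x (Function.update m i t)) =
      (fun t => ∑ σ : Equiv.Perm (Fin N),
        Real.exp (x (σ⁻¹ i) * t + ∑ j ∈ univ.erase (σ⁻¹ i), m (σ j) * x j)) := by
    intro i
    funext t
    unfold symExp
    refine Finset.sum_congr rfl fun σ _ => ?_
    congr 1
    rw [← Finset.add_sum_erase _ _ (mem_univ (σ⁻¹ i))]
    congr 1
    · rw [Equiv.Perm.coe_inv, Equiv.apply_symm_apply, Function.update_self, mul_comm]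
    · refine Finset.sum_congr rfl fun j hj => ?_
      rw [Function.update_of_ne]
      intro h
      exact Finset.ne_of_mem_erase hj (by simp [← h])
  calc ∑ i, x i * deriv^[l] (fun t => symExp (Function.update x i t) m) (x i)
      = ∑ i, ∑ σ : Equiv.Perm (Fin N),
          x i * ((m (σ i)) ^ l * Real.exp (∑ j, m (σ j) * x j)) := by
        refine Finset.sum_congr rfl fun i _ => ?_
        rw [keyL i, iter_deriv_exp_sum, Finset.mul_sum]
        refine Finset.sum_congr rfl fun σ _ => ?_
        rw [show (m (σ i) * x i + ∑ j ∈ univ.erase i, m (σ j) * x j) = ∑ j, m (σ j) * x j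
          from Finset.add_sum_erase _ (fun j => m (σ j) * x j) (mem_univ i)]
    _ = ∑ σ : Equiv.Perm (Fin N), ∑ i,
          x i * ((m (σ i)) ^ l * Real.exp (∑ j, m (σ j) * x j)) := Finset.sum_comm
    _ = ∑ σ : Equiv.Perm (Fin N), ∑ i,
          m i ^ l * (x (σ⁻¹ i) * Real.exp (∑ j, m (σ j) * x j)) := by
        refine Finset.sum_congr rfl fun σ _ => ?_
        rw [← Equiv.sum_comp σ (fun i => m i ^ l * (x (σ⁻¹ i) * Real.exp (∑ j, m (σ j) * x j)))]
        refine Finset.sum_congr rfl fun i _ => ?_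
        rw [Equiv.Perm.coe_inv, Equiv.symm_apply_apply]
        ring
    _ = ∑ i, ∑ σ : Equiv.Perm (Fin N),
          m i ^ l * (x (σ⁻¹ i) * Real.exp (∑ j, m (σ j) * x j)) := Finset.sum_comm
    _ = ∑ i, m i ^ l * deriv (fun t => symExp x (Function.update m i t)) (m i) := by
        refine Finset.sum_congr rfl fun i _ => ?_
        have := iter_deriv_exp_sum (univ : Finset (Equiv.Perm (Fin N)))
          (fun σ => x (σ⁻¹ i)) (fun σ => ∑ j ∈ univ.erase (σ⁻¹ i), m (σ j) * x j) 1
        rw [keyR i]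
        rw [show deriv (fun t => ∑ σ : Equiv.Perm (Fin N),
          Real.exp (x (σ⁻¹ i) * t + ∑ j ∈ univ.erase (σ⁻¹ i), m (σ j) * x j)) =
          deriv^[1] (fun t => ∑ σ : Equiv.Perm (Fin N),
          Real.exp (x (σ⁻¹ i) * t + ∑ j ∈ univ.erase (σ⁻¹ i), m (σ j) * x j)) from rfl, this]
        rw [Finset.mul_sum]
        refine Finset.sum_congr rfl fun σ _ => ?_
        have harg : x (σ⁻¹ i) * m i + ∑ j ∈ univ.erase (σ⁻¹ i), m (σ j) * x j
            = ∑ j, m (σ j) * x j := by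
          rw [← Finset.add_sum_erase _ (fun j => m (σ j) * x j) (mem_univ (σ⁻¹ i))]
          simp [Equiv.Perm.coe_inv, mul_comm]
        rw [harg]
        ring
end
end

section
/- For N = 2, the function J(x_1,x_2) = exp(m_+ x_+/2) · (m_− x_−)^{1/2−g} · I_{g−1/2}(m_− x_−/2), where x_± = x_1 ± x_2, m_± = m_1 ± m_2, and I_ν is the modified Bessel function of the first kind, satisfies (∂_1 + ∂_2) J = (m_1 + m_2) J and (∂_1² + ∂_2² + 2g(x_1−x_2)^{-1}(∂_1 − ∂_2)) J = (m_1² + m_2²) J on the region x_1 > x_2, for m_1 > m_2. -/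
noncomputable section

/-- The modified Bessel function of the first kind,
`I_ν(z) = ∑_{k=0}^∞ (z/2)^{2k+ν} / (k! Γ(k+ν+1))`. -/
def besselI (ν z : ℝ) : ℝ :=
  ∑' k : ℕ, (z / 2) ^ (2 * (k : ℝ) + ν) / ((k.factorial : ℝ) * Real.Gamma ((k : ℝ) + ν + 1))

/-- `J(x₁,x₂) = exp(m₊ x₊ / 2) (m₋ x₋)^{1/2 - g} I_{g - 1/2}(m₋ x₋ / 2)`. -/
def Jfun (g m1 m2 x1 x2 : ℝ) : ℝ :=
  Real.exp ((m1 + m2) * (x1 + x2) / 2) *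
    ((m1 - m2) * (x1 - x2)) ^ ((1 : ℝ) / 2 - g) *
    besselI (g - 1 / 2) ((m1 - m2) * (x1 - x2) / 2)

namespace JfunAux

/-- coefficients of the even power series -/
def c (g m : ℝ) (k : ℕ) : ℝ :=
  (m / 4) ^ (2 * (k : ℝ) + (g - 1 / 2)) * m ^ ((1 : ℝ) / 2 - g) /
    ((k.factorial : ℝ) * Real.Gamma ((k : ℝ) + (g - 1 / 2) + 1))

def F (g m x : ℝ) : ℝ := ∑' k : ℕ, c g m k * x ^ (2 * k)
def F1 (g m x : ℝ) : ℝ := ∑' k : ℕ, c g m k * (((2 * k : ℕ) : ℝ) * x ^ (2 * k - 1))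
def F2 (g m x : ℝ) : ℝ :=
  ∑' k : ℕ, c g m k * (((2 * k : ℕ) : ℝ) * (((2 * k - 1 : ℕ) : ℝ) * x ^ (2 * k - 1 - 1)))

lemma rep (g m : ℝ) (hm : 0 < m) {u : ℝ} (hu : 0 < u) :
    (m * u) ^ ((1 : ℝ) / 2 - g) * besselI (g - 1 / 2) (m * u / 2) = F g m u := by
  unfold besselI F c
  rw [← tsum_mul_left]
  refine tsum_congr fun k => ?_
  have h1 : m * u / 2 / 2 = (m / 4) * u := by ring
  have hm4 : (0:ℝ) < m / 4 := by linarith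
  rw [h1, Real.mul_rpow hm4.le hu.le, Real.mul_rpow hm.le hu.le]
  have h2 : u ^ ((1:ℝ)/2 - g) * u ^ (2 * (k:ℝ) + (g - 1/2)) = u ^ (2*k : ℕ) := by
    rw [← Real.rpow_add hu, ← Real.rpow_natCast]
    norm_num
    ring_nf
  field_simp
  rw [← h2]
  ring

lemma recur (g m : ℝ) (hm : 0 < m) (k : ℕ) :
    c g m (k + 1) * (16 * ((k : ℝ) + 1) * ((k : ℝ) + g + 1 / 2)) = m ^ 2 * c g m k := by
  have hm4 : (0:ℝ) < m / 4 := by linarith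
  set s : ℝ := (k : ℝ) + (g - 1 / 2) + 1 with hs
  have hsval : s = (k : ℝ) + g + 1 / 2 := by rw [hs]; ring
  by_cases hΓ : Real.Gamma s = 0
  · have hck : c g m k = 0 := by
      unfold c; rw [← hs, hΓ, mul_zero, div_zero]
    obtain ⟨n, hn⟩ := (Real.Gamma_eq_zero_iff s).mp hΓ
    rcases Nat.eq_zero_or_pos n with h0 | hpos
    · have : s = 0 := by simp [hn, h0]
      rw [hck, mul_zero, ← hsval, this]
      ring
    · have hΓ1 : Real.Gamma (((k:ℝ)+1) + (g - 1/2) + 1) = 0 := by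
        have h4 : ((k:ℝ)+1) + (g - 1/2) + 1 = -((n-1 : ℕ) : ℝ) := by
          have h5 : s + 1 = -((n : ℝ) - 1) := by rw [hn]; ring
          rw [hs] at h5
          push_cast [Nat.cast_sub hpos]
          linarith
        rw [h4]
        exact (Real.Gamma_eq_zero_iff _).mpr ⟨n-1, rfl⟩
      have hck1 : c g m (k+1) = 0 := by
        unfold c
        push_cast
        rw [hΓ1, mul_zero, div_zero]
      rw [hck, hck1]; ring
  · have hs0 : s ≠ 0 := by
      intro h; rw [h] at hΓ; exact hΓ Real.Gamma_zero
    have hΓ1 : Real.Gamma (((k:ℝ)+1) + (g - 1/2) + 1) = s * Real.Gamma s := by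
      have : ((k:ℝ)+1) + (g - 1/2) + 1 = s + 1 := by rw [hs]; ring
      rw [this, Real.Gamma_add_one hs0]
    have hpow : (m/4) ^ (2 * ((k:ℝ)+1) + (g - 1/2)) =
        (m/4)^2 * (m/4) ^ (2 * (k:ℝ) + (g - 1/2)) := by
      rw [← Real.rpow_natCast (m/4) 2, ← Real.rpow_add hm4]
      norm_num
      ring_nf
    unfold c
    push_cast
    rw [hΓ1, hpow, Nat.factorial_succ]
    push_cast
    have hk : ((k.factorial : ℝ)) ≠ 0 := Nat.cast_ne_zero.mpr k.factorial_ne_zero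
    have hk1 : ((k:ℝ) + 1) ≠ 0 := by positivity
    rw [← hs, ← hsval]
    field_simp [hk, hΓ, hs0, hk1]
    ring

lemma Gamma_mono (s₀ : ℝ) (h : 1 ≤ s₀) (n : ℕ) : Real.Gamma s₀ ≤ Real.Gamma (s₀ + n) := by
  induction n with
  | zero => simp
  | succ n ih =>
    have h1 : (0:ℝ) < s₀ + n := by
      have : (0:ℝ) ≤ (n:ℝ) := Nat.cast_nonneg n
      linarith
    have key : Real.Gamma (s₀ + (n+1:ℕ)) = (s₀ + n) * Real.Gamma (s₀ + n) := by
      rw [show s₀ + ((n:ℕ)+1:ℕ) = (s₀ + n) + 1 by push_cast; ring, Real.Gamma_add_one h1.ne']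
    rw [key]
    calc Real.Gamma s₀ ≤ Real.Gamma (s₀+n) := ih
      _ ≤ (s₀+n) * Real.Gamma (s₀+n) :=
        le_mul_of_one_le_left (Real.Gamma_pos_of_pos h1).le (by linarith)

lemma c_eq (g m : ℝ) (hm : 0 < m) (k : ℕ) :
    c g m k = ((m/4)^(g-1/2) * m^((1:ℝ)/2-g)) * ((m/4)^2)^k /
      ((k.factorial:ℝ) * Real.Gamma ((k:ℝ)+(g-1/2)+1)) := by
  have hm4 : (0:ℝ) < m/4 := by linarith
  unfold c
  rw [show 2*(k:ℝ) + (g-1/2) = (g-1/2) + ((2*k:ℕ):ℝ) by push_cast; ring,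
    Real.rpow_add hm4, Real.rpow_natCast, pow_mul]
  ring

lemma summable_master (g m : ℝ) (hm : 0 < m) {B : ℝ} (hB : 0 ≤ B) :
    Summable fun k : ℕ => |c g m k| * (2*(k:ℝ)+2)^2 * B^k := by
  have hm4 : (0:ℝ) < m/4 := by linarith
  set k₀ : ℕ := ⌈(1:ℝ)/2 - g⌉₊ with hk₀
  have hs₀ : (1:ℝ) ≤ (k₀:ℝ) + (g - 1/2) + 1 := by
    have := Nat.le_ceil ((1:ℝ)/2 - g); linarith
  have hεpos : 0 < Real.Gamma ((k₀:ℝ) + (g-1/2) + 1) := Real.Gamma_pos_of_pos (by linarith)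
  set ε : ℝ := Real.Gamma ((k₀:ℝ) + (g-1/2) + 1) with hε
  set A : ℝ := (m/4)^(g-1/2) * m^((1:ℝ)/2-g) with hA
  have hApos : 0 < A := by rw [hA]; positivity
  set q : ℝ := (m/4)^2 with hq
  have hqpos : 0 < q := by rw [hq]; positivity
  apply Summable.of_norm_bounded_eventually_nat
    (g := fun k => (4*A/ε) * (4*(q*B))^k / (k.factorial:ℝ))
  · have := (Real.summable_pow_div_factorial (4*(q*B))).mul_left (4*A/ε)
    simpa [mul_div_assoc] using this
  · filter_upwards [Filter.eventually_ge_atTop k₀] with k hk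
    have hΓk : ε ≤ Real.Gamma ((k:ℝ) + (g-1/2) + 1) := by
      obtain ⟨j, rfl⟩ := Nat.exists_eq_add_of_le hk
      have h6 := Gamma_mono _ hs₀ j
      rw [show (((k₀+j:ℕ):ℝ)+(g-1/2)+1) = ((k₀:ℝ)+(g-1/2)+1)+(j:ℝ) by push_cast; ring]
      exact h6
    have hΓpos : 0 < Real.Gamma ((k:ℝ)+(g-1/2)+1) := lt_of_lt_of_le hεpos hΓk
    have hfac : (0:ℝ) < (k.factorial:ℝ) := by exact_mod_cast k.factorial_pos
    have hcpos : 0 ≤ c g m k := by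
      rw [c_eq g m hm]
      exact div_nonneg (by positivity) (mul_nonneg hfac.le hΓpos.le)
    have hc : |c g m k| ≤ A * q^k / ((k.factorial:ℝ) * ε) := by
      rw [abs_of_nonneg hcpos, c_eq g m hm, hε, hA, hq]
      gcongr
    have hsq : (2*(k:ℝ)+2)^2 ≤ 4*4^k := by
      have h1 : (k:ℝ)+1 ≤ 2^k := by
        have : k+1 ≤ 2^k := Nat.lt_two_pow_self
        exact_mod_cast this
      have h2 : (0:ℝ) ≤ 2*(k:ℝ)+2 := by positivity
      have h3 : 2*(k:ℝ)+2 ≤ 2*2^k := by linarith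
      calc (2*(k:ℝ)+2)^2 ≤ (2*2^k)^2 := pow_le_pow_left₀ h2 h3 2
        _ = 4*4^k := by rw [mul_pow, ← pow_mul, mul_comm k 2, pow_mul]; norm_num
    rw [Real.norm_eq_abs, abs_of_nonneg (by positivity)]
    calc |c g m k| * (2*(k:ℝ)+2)^2 * B^k
        ≤ (A * q^k / ((k.factorial:ℝ) * ε)) * (4*4^k) * B^k :=
          mul_le_mul (mul_le_mul hc hsq (by positivity) (by positivity)) le_rfl
            (pow_nonneg hB k) (by positivity)
      _ = (4*A/ε) * (4*(q*B))^k / (k.factorial:ℝ) := by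
          rw [mul_pow, mul_pow]
          field_simp

lemma bound0 (g m : ℝ) {x R : ℝ} (hR : 1 ≤ R) (hx : |x| ≤ R) (k : ℕ) :
    ‖c g m k * x ^ (2*k)‖ ≤ |c g m k| * (2*(k:ℝ)+2)^2 * (R^2)^k := by
  have hR0 : (0:ℝ) ≤ R := by linarith
  rw [Real.norm_eq_abs, abs_mul, abs_pow]
  have h1 : |x|^(2*k) ≤ (R^2)^k := by
    calc |x|^(2*k) ≤ R^(2*k) := pow_le_pow_left₀ (abs_nonneg x) hx _
      _ = (R^2)^k := by rw [← pow_mul]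
  have h2 : (1:ℝ) ≤ (2*(k:ℝ)+2)^2 := by nlinarith [Nat.cast_nonneg (α := ℝ) k]
  calc |c g m k| * |x|^(2*k) ≤ |c g m k| * (R^2)^k := by gcongr
    _ = |c g m k| * 1 * (R^2)^k := by ring
    _ ≤ |c g m k| * (2*(k:ℝ)+2)^2 * (R^2)^k := by gcongr

lemma pow_aux {x R : ℝ} (hR : 1 ≤ R) (hx : |x| ≤ R) (k n : ℕ) (hn : n ≤ 2*k) :
    |x|^n ≤ (R^2)^k := by
  calc |x|^n ≤ R^n := pow_le_pow_left₀ (abs_nonneg x) hx _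
    _ ≤ R^(2*k) := pow_le_pow_right₀ hR hn
    _ = (R^2)^k := by rw [← pow_mul]

lemma bound1 (g m : ℝ) {x R : ℝ} (hR : 1 ≤ R) (hx : |x| ≤ R) (k : ℕ) :
    ‖c g m k * (((2*k:ℕ):ℝ) * x ^ (2*k-1))‖ ≤ |c g m k| * (2*(k:ℝ)+2)^2 * (R^2)^k := by
  rw [Real.norm_eq_abs, abs_mul, abs_mul, abs_pow, Nat.abs_cast, mul_assoc]
  refine mul_le_mul_of_nonneg_left ?_ (abs_nonneg _)
  have ha : ((2*k:ℕ):ℝ) ≤ (2*(k:ℝ)+2)^2 := by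
    push_cast
    nlinarith [Nat.cast_nonneg (α := ℝ) k]
  have hb : |x|^(2*k-1) ≤ (R^2)^k := pow_aux hR hx k _ (by omega)
  exact mul_le_mul ha hb (by positivity) (by positivity)

lemma bound2 (g m : ℝ) {x R : ℝ} (hR : 1 ≤ R) (hx : |x| ≤ R) (k : ℕ) :
    ‖c g m k * (((2*k:ℕ):ℝ) * (((2*k-1:ℕ):ℝ) * x ^ (2*k-1-1)))‖ ≤
      |c g m k| * (2*(k:ℝ)+2)^2 * (R^2)^k := by
  rw [Real.norm_eq_abs, abs_mul, abs_mul, abs_mul, abs_pow, Nat.abs_cast, Nat.abs_cast,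
    mul_assoc]
  refine mul_le_mul_of_nonneg_left ?_ (abs_nonneg _)
  have ha : ((2*k:ℕ):ℝ) * ((2*k-1:ℕ):ℝ) ≤ (2*(k:ℝ)+2)^2 := by
    have h1 : ((2*k:ℕ):ℝ) ≤ 2*(k:ℝ)+2 := by push_cast; linarith
    have h2 : ((2*k-1:ℕ):ℝ) ≤ 2*(k:ℝ)+2 := by
      calc ((2*k-1:ℕ):ℝ) ≤ ((2*k+2:ℕ):ℝ) := Nat.cast_le.mpr (by omega)
        _ = 2*(k:ℝ)+2 := by push_cast; ring
    have h4 : (0:ℝ) ≤ 2*(k:ℝ)+2 := by positivity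
    calc ((2*k:ℕ):ℝ) * ((2*k-1:ℕ):ℝ) ≤ (2*(k:ℝ)+2) * (2*(k:ℝ)+2) :=
        mul_le_mul h1 h2 (Nat.cast_nonneg _) h4
      _ = (2*(k:ℝ)+2)^2 := by ring
  have hb : |x|^(2*k-1-1) ≤ (R^2)^k := pow_aux hR hx k _ (by omega)
  calc ((2*k:ℕ):ℝ) * (((2*k-1:ℕ):ℝ) * |x|^(2*k-1-1))
      = (((2*k:ℕ):ℝ) * ((2*k-1:ℕ):ℝ)) * |x|^(2*k-1-1) := by ring
    _ ≤ (2*(k:ℝ)+2)^2 * (R^2)^k := mul_le_mul ha hb (by positivity) (by positivity)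

lemma mem_abs {y R : ℝ} (hy : y ∈ Set.Ioo (-R) R) : |y| ≤ R := by
  rw [abs_le]; exact ⟨hy.1.le, hy.2.le⟩

lemma summable_F (g m : ℝ) (hm : 0 < m) {x R : ℝ} (hR : 1 ≤ R) (hx : |x| ≤ R) :
    Summable fun k : ℕ => c g m k * x ^ (2*k) :=
  Summable.of_norm_bounded (summable_master g m hm (by positivity)) (bound0 g m hR hx)

lemma summable_F1 (g m : ℝ) (hm : 0 < m) {x R : ℝ} (hR : 1 ≤ R) (hx : |x| ≤ R) :
    Summable fun k : ℕ => c g m k * (((2*k:ℕ):ℝ) * x ^ (2*k-1)) :=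
  Summable.of_norm_bounded (summable_master g m hm (by positivity)) (bound1 g m hR hx)

lemma summable_F2 (g m : ℝ) (hm : 0 < m) {x R : ℝ} (hR : 1 ≤ R) (hx : |x| ≤ R) :
    Summable fun k : ℕ => c g m k * (((2*k:ℕ):ℝ) * (((2*k-1:ℕ):ℝ) * x ^ (2*k-1-1))) :=
  Summable.of_norm_bounded (summable_master g m hm (by positivity)) (bound2 g m hR hx)

lemma hasDerivAt_F (g m : ℝ) (hm : 0 < m) {R : ℝ} (hR : 1 ≤ R) {x : ℝ}
    (hx : x ∈ Set.Ioo (-R) R) : HasDerivAt (F g m) (F1 g m x) x := by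
  have h0mem : (0:ℝ) ∈ Set.Ioo (-R) R := ⟨by linarith, by linarith⟩
  exact hasDerivAt_tsum_of_isPreconnected
    (summable_master g m hm (B := R^2) (by positivity)) isOpen_Ioo isPreconnected_Ioo
    (fun k y _ => (hasDerivAt_pow (2*k) y).const_mul (c g m k))
    (fun k y hy => bound1 g m hR (mem_abs hy) k) h0mem
    (summable_F g m hm hR (by rw [abs_zero]; linarith)) hx

lemma hasDerivAt_F1 (g m : ℝ) (hm : 0 < m) {R : ℝ} (hR : 1 ≤ R) {x : ℝ}
    (hx : x ∈ Set.Ioo (-R) R) : HasDerivAt (F1 g m) (F2 g m x) x := by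
  have h0mem : (0:ℝ) ∈ Set.Ioo (-R) R := ⟨by linarith, by linarith⟩
  exact hasDerivAt_tsum_of_isPreconnected
    (summable_master g m hm (B := R^2) (by positivity)) isOpen_Ioo isPreconnected_Ioo
    (fun k y _ => by
      simpa [mul_assoc] using
        (hasDerivAt_pow (2*k-1) y).const_mul (c g m k * ((2*k:ℕ):ℝ)))
    (fun k y hy => bound2 g m hR (mem_abs hy) k) h0mem
    (summable_F1 g m hm hR (by rw [abs_zero]; linarith)) hx

lemma ode (g m : ℝ) (hm : 0 < m) {x : ℝ} (hx : 0 < x) :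
    F2 g m x + 2*g/x * F1 g m x = m^2/4 * F g m x := by
  have hR : (1:ℝ) ≤ |x| + 1 := by have := abs_nonneg x; linarith
  have hxR : |x| ≤ |x| + 1 := by linarith
  have hS2 := summable_F2 g m hm hR hxR
  have hS1 := summable_F1 g m hm hR hxR
  have hS0 := summable_F g m hm hR hxR
  have hS1' : Summable fun k : ℕ =>
      2*g/x * (c g m k * (((2*k:ℕ):ℝ) * x ^ (2*k-1))) := hS1.mul_left _
  unfold F F1 F2
  rw [← tsum_mul_left, ← tsum_mul_left, ← Summable.tsum_add hS2 hS1']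
  have hsum : Summable fun k : ℕ =>
      c g m k * (((2*k:ℕ):ℝ) * (((2*k-1:ℕ):ℝ) * x ^ (2*k-1-1))) +
        2*g/x * (c g m k * (((2*k:ℕ):ℝ) * x ^ (2*k-1))) := hS2.add hS1'
  rw [Summable.tsum_eq_zero_add hsum]
  have h0 : c g m 0 * (((2*0:ℕ):ℝ) * (((2*0-1:ℕ):ℝ) * x ^ (2*0-1-1))) +
      2*g/x * (c g m 0 * (((2*0:ℕ):ℝ) * x ^ (2*0-1))) = 0 := by norm_num
  rw [h0, zero_add]
  refine tsum_congr fun k => ?_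
  have e1 : 2*(k+1)-1 = 2*k+1 := by omega
  have e2 : 2*(k+1)-1-1 = 2*k := by omega
  have key : c g m (k+1) * ((2*(k:ℝ)+2) * ((2*(k:ℝ)+1) + 2*g)) = m^2/4 * c g m k := by
    linear_combination (recur g m hm k) / 4
  simp only [e1, e2]
  have hxne : x ≠ 0 := hx.ne'
  have hdiv : 2*g/x * (c g m (k+1) * (((2*(k+1):ℕ):ℝ) * x ^ (2*k+1))) =
      2*g * (c g m (k+1) * (((2*(k+1):ℕ):ℝ) * x ^ (2*k))) := by
    rw [pow_succ]
    field_simp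
  rw [hdiv]
  push_cast
  linear_combination x^(2*k) * key

end JfunAux

open JfunAux

theorem Jfun_eigenfunction (g m1 m2 : ℝ) (hm : m2 < m1)
    (x1 x2 : ℝ) (hx : x2 < x1) :
    deriv (fun t => Jfun g m1 m2 t x2) x1 +
        deriv (fun t => Jfun g m1 m2 x1 t) x2 =
      (m1 + m2) * Jfun g m1 m2 x1 x2 ∧
    deriv (deriv (fun t => Jfun g m1 m2 t x2)) x1 +
        deriv (deriv (fun t => Jfun g m1 m2 x1 t)) x2 +
        2 * g / (x1 - x2) *
          (deriv (fun t => Jfun g m1 m2 t x2) x1 -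
            deriv (fun t => Jfun g m1 m2 x1 t) x2) =
      (m1 ^ 2 + m2 ^ 2) * Jfun g m1 m2 x1 x2 := by
  have hmm : 0 < m1 - m2 := sub_pos.mpr hm
  have hu0 : 0 < x1 - x2 := sub_pos.mpr hx
  set R : ℝ := (x1 - x2) + 1 with hRdef
  have hR1 : (1:ℝ) ≤ R := by rw [hRdef]; linarith
  -- variable 1
  have hmem1 : x1 ∈ Set.Ioo x2 (x2 + R) := ⟨hx, by rw [hRdef]; linarith⟩
  have hsub1 : ∀ t ∈ Set.Ioo x2 (x2+R), t - x2 ∈ Set.Ioo (-R) R := fun t ht =>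
    ⟨by have := ht.1; linarith, by have := ht.2; linarith⟩
  have hJ1 : ∀ t ∈ Set.Ioo x2 (x2+R), Jfun g m1 m2 t x2 =
      Real.exp ((m1+m2)*(t+x2)/2) * F g (m1-m2) (t - x2) := fun t ht => by
    rw [Jfun, mul_assoc, rep g (m1-m2) hmm (sub_pos.mpr ht.1)]
  have hexp1 : ∀ t : ℝ, HasDerivAt (fun t => Real.exp ((m1+m2)*(t+x2)/2))
      (Real.exp ((m1+m2)*(t+x2)/2) * ((m1+m2)/2)) t := fun t => by
    have h1 : HasDerivAt (fun t : ℝ => (m1+m2)*(t+x2)/2) ((m1+m2)/2) t := by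
      simpa using (((hasDerivAt_id t).add_const x2).const_mul (m1+m2)).div_const 2
    exact h1.exp
  have hinner1 : ∀ t : ℝ, HasDerivAt (fun t : ℝ => t - x2) 1 t := fun t =>
    (hasDerivAt_id t).sub_const x2
  have hdF1 : ∀ t ∈ Set.Ioo x2 (x2+R), HasDerivAt (fun t => F g (m1-m2) (t - x2))
      (F1 g (m1-m2) (t - x2)) t := fun t ht => by
    simpa [Function.comp_def] using
      (hasDerivAt_F g (m1-m2) hmm hR1 (hsub1 t ht)).comp t (hinner1 t)
  have hdF1' : ∀ t ∈ Set.Ioo x2 (x2+R), HasDerivAt (fun t => F1 g (m1-m2) (t - x2))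
      (F2 g (m1-m2) (t - x2)) t := fun t ht => by
    simpa [Function.comp_def] using
      (hasDerivAt_F1 g (m1-m2) hmm hR1 (hsub1 t ht)).comp t (hinner1 t)
  have hG1 : ∀ t ∈ Set.Ioo x2 (x2+R), HasDerivAt
      (fun t => Real.exp ((m1+m2)*(t+x2)/2) * F g (m1-m2) (t - x2))
      (Real.exp ((m1+m2)*(t+x2)/2) *
        ((m1+m2)/2 * F g (m1-m2) (t - x2) + F1 g (m1-m2) (t - x2))) t := fun t ht => by
    have h2 := (hexp1 t).mul (hdF1 t ht)
    exact h2.congr_deriv (by ring)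
  have hG1d : ∀ t ∈ Set.Ioo x2 (x2+R), HasDerivAt
      (fun t => Real.exp ((m1+m2)*(t+x2)/2) *
        ((m1+m2)/2 * F g (m1-m2) (t - x2) + F1 g (m1-m2) (t - x2)))
      (Real.exp ((m1+m2)*(t+x2)/2) *
        (((m1+m2)/2)^2 * F g (m1-m2) (t-x2) + (m1+m2) * F1 g (m1-m2) (t-x2)
          + F2 g (m1-m2) (t-x2))) t := fun t ht => by
    have h2 : HasDerivAt (fun t => (m1+m2)/2 * F g (m1-m2) (t - x2) + F1 g (m1-m2) (t - x2))
        ((m1+m2)/2 * F1 g (m1-m2) (t-x2) + F2 g (m1-m2) (t-x2)) t :=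
      ((hdF1 t ht).const_mul ((m1+m2)/2)).add (hdF1' t ht)
    have h3 := (hexp1 t).mul h2
    exact h3.congr_deriv (by ring)
  have hnh1 : Set.Ioo x2 (x2+R) ∈ nhds x1 := isOpen_Ioo.mem_nhds hmem1
  have hder1 : deriv (fun t => Jfun g m1 m2 t x2) =ᶠ[nhds x1]
      (fun t => Real.exp ((m1+m2)*(t+x2)/2) *
        ((m1+m2)/2 * F g (m1-m2) (t - x2) + F1 g (m1-m2) (t - x2))) := by
    filter_upwards [hnh1] with t ht
    have hev : (fun t => Jfun g m1 m2 t x2) =ᶠ[nhds t]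
        (fun t => Real.exp ((m1+m2)*(t+x2)/2) * F g (m1-m2) (t - x2)) :=
      Filter.eventually_of_mem (isOpen_Ioo.mem_nhds ht) hJ1
    rw [hev.deriv_eq, (hG1 t ht).deriv]
  have hd1val : deriv (fun t => Jfun g m1 m2 t x2) x1 =
      Real.exp ((m1+m2)*(x1+x2)/2) *
        ((m1+m2)/2 * F g (m1-m2) (x1-x2) + F1 g (m1-m2) (x1-x2)) := hder1.eq_of_nhds
  have hdd1val : deriv (deriv (fun t => Jfun g m1 m2 t x2)) x1 =
      Real.exp ((m1+m2)*(x1+x2)/2) * (((m1+m2)/2)^2 * F g (m1-m2) (x1-x2)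
        + (m1+m2) * F1 g (m1-m2) (x1-x2) + F2 g (m1-m2) (x1-x2)) := by
    rw [hder1.deriv_eq, (hG1d x1 hmem1).deriv]
  -- variable 2
  have hmem2 : x2 ∈ Set.Ioo (x1-R) x1 := ⟨by rw [hRdef]; linarith, hx⟩
  have hsub2 : ∀ t ∈ Set.Ioo (x1-R) x1, x1 - t ∈ Set.Ioo (-R) R := fun t ht =>
    ⟨by have := ht.2; linarith, by have := ht.1; linarith⟩
  have hJ2 : ∀ t ∈ Set.Ioo (x1-R) x1, Jfun g m1 m2 x1 t =
      Real.exp ((m1+m2)*(x1+t)/2) * F g (m1-m2) (x1 - t) := fun t ht => by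
    rw [Jfun, mul_assoc, rep g (m1-m2) hmm (sub_pos.mpr ht.2)]
  have hexp2 : ∀ t : ℝ, HasDerivAt (fun t => Real.exp ((m1+m2)*(x1+t)/2))
      (Real.exp ((m1+m2)*(x1+t)/2) * ((m1+m2)/2)) t := fun t => by
    have h1 : HasDerivAt (fun t : ℝ => (m1+m2)*(x1+t)/2) ((m1+m2)/2) t := by
      simpa using (((hasDerivAt_id t).const_add x1).const_mul (m1+m2)).div_const 2
    exact h1.exp
  have hinner2 : ∀ t : ℝ, HasDerivAt (fun t : ℝ => x1 - t) (-1) t := fun t => by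
    simpa using (hasDerivAt_id t).const_sub x1
  have hdF2 : ∀ t ∈ Set.Ioo (x1-R) x1, HasDerivAt (fun t => F g (m1-m2) (x1 - t))
      (-(F1 g (m1-m2) (x1 - t))) t := fun t ht => by
    have h2 := (hasDerivAt_F g (m1-m2) hmm hR1 (hsub2 t ht)).comp t (hinner2 t)
    simpa [Function.comp_def] using h2
  have hdF2' : ∀ t ∈ Set.Ioo (x1-R) x1, HasDerivAt (fun t => F1 g (m1-m2) (x1 - t))
      (-(F2 g (m1-m2) (x1 - t))) t := fun t ht => by
    have h2 := (hasDerivAt_F1 g (m1-m2) hmm hR1 (hsub2 t ht)).comp t (hinner2 t)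
    simpa [Function.comp_def] using h2
  have hG2 : ∀ t ∈ Set.Ioo (x1-R) x1, HasDerivAt
      (fun t => Real.exp ((m1+m2)*(x1+t)/2) * F g (m1-m2) (x1 - t))
      (Real.exp ((m1+m2)*(x1+t)/2) *
        ((m1+m2)/2 * F g (m1-m2) (x1 - t) - F1 g (m1-m2) (x1 - t))) t := fun t ht => by
    have h2 := (hexp2 t).mul (hdF2 t ht)
    exact h2.congr_deriv (by ring)
  have hG2d : ∀ t ∈ Set.Ioo (x1-R) x1, HasDerivAt
      (fun t => Real.exp ((m1+m2)*(x1+t)/2) *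
        ((m1+m2)/2 * F g (m1-m2) (x1 - t) - F1 g (m1-m2) (x1 - t)))
      (Real.exp ((m1+m2)*(x1+t)/2) *
        (((m1+m2)/2)^2 * F g (m1-m2) (x1-t) - (m1+m2) * F1 g (m1-m2) (x1-t)
          + F2 g (m1-m2) (x1-t))) t := fun t ht => by
    have h2 : HasDerivAt (fun t => (m1+m2)/2 * F g (m1-m2) (x1 - t) - F1 g (m1-m2) (x1 - t))
        ((m1+m2)/2 * (-(F1 g (m1-m2) (x1-t))) - (-(F2 g (m1-m2) (x1-t)))) t :=
      ((hdF2 t ht).const_mul ((m1+m2)/2)).sub (hdF2' t ht)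
    have h3 := (hexp2 t).mul h2
    exact h3.congr_deriv (by ring)
  have hnh2 : Set.Ioo (x1-R) x1 ∈ nhds x2 := isOpen_Ioo.mem_nhds hmem2
  have hder2 : deriv (fun t => Jfun g m1 m2 x1 t) =ᶠ[nhds x2]
      (fun t => Real.exp ((m1+m2)*(x1+t)/2) *
        ((m1+m2)/2 * F g (m1-m2) (x1 - t) - F1 g (m1-m2) (x1 - t))) := by
    filter_upwards [hnh2] with t ht
    have hev : (fun t => Jfun g m1 m2 x1 t) =ᶠ[nhds t]
        (fun t => Real.exp ((m1+m2)*(x1+t)/2) * F g (m1-m2) (x1 - t)) :=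
      Filter.eventually_of_mem (isOpen_Ioo.mem_nhds ht) hJ2
    rw [hev.deriv_eq, (hG2 t ht).deriv]
  have hd2val : deriv (fun t => Jfun g m1 m2 x1 t) x2 =
      Real.exp ((m1+m2)*(x1+x2)/2) *
        ((m1+m2)/2 * F g (m1-m2) (x1-x2) - F1 g (m1-m2) (x1-x2)) := hder2.eq_of_nhds
  have hdd2val : deriv (deriv (fun t => Jfun g m1 m2 x1 t)) x2 =
      Real.exp ((m1+m2)*(x1+x2)/2) * (((m1+m2)/2)^2 * F g (m1-m2) (x1-x2)
        - (m1+m2) * F1 g (m1-m2) (x1-x2) + F2 g (m1-m2) (x1-x2)) := by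
    rw [hder2.deriv_eq, (hG2d x2 hmem2).deriv]
  have hJval : Jfun g m1 m2 x1 x2 =
      Real.exp ((m1+m2)*(x1+x2)/2) * F g (m1-m2) (x1-x2) := hJ1 x1 hmem1
  have hode := ode g (m1-m2) hmm hu0
  constructor
  · rw [hd1val, hd2val, hJval]; ring
  · rw [hdd1val, hdd2val, hd1val, hd2val, hJval]
    linear_combination 2 * Real.exp ((m1+m2)*(x1+x2)/2) * hode
end
end
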